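/- Let t be a finite ordered tree, S a zone with s nodes, and 0 < θ ≤ 1. Then S can be partitioned into at most 10·s^θ zones, each of size at most s^{1-θ}. -/

import Mathlib

/-- Finite ordered unranked trees over an alphabet `α`. -/
inductive OTree (α : Type) : Type
  | node : α → List (OTree α) → OTree α

namespace OTree

/-- The subtree of a tree at a path of child indices, if it exists. -/
def subtreeAux {α : Type} : List ℕ → OTree α → Option (OTree α)
  | [], t => some t
  | i :: p, node _ ts => (ts[i]?).bind (subtreeAux p)

def subtree {α : Type} (t : OTree α) (p : List ℕ) : Option (OTree α) := subtreeAux p t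

/-- `p` is (the path of) a node of `t`. -/
def IsNode {α : Type} (t : OTree α) (p : List ℕ) : Prop := (subtree t p).isSome

/-- The set of nodes (represented by their paths) of `t`. -/
def nodes {α : Type} (t : OTree α) : Set (List ℕ) := {p | IsNode t p}

/-- The number of children of the node `p` of `t`. -/
def numChildren {α : Type} (t : OTree α) (p : List ℕ) : ℕ :=
  match subtree t p with
  | some (node _ ts) => ts.length
  | none => 0

/-- A zone of `t`: a proper subforest (its top nodes form a consecutive interval of
siblings), each node has all or none of its children in the zone, and there is at
most one vertical connection node (a node whose children are outside the zone). -/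
def IsZone {α : Type} (t : OTree α) (S : Set (List ℕ)) : Prop :=
  (∀ p ∈ S, IsNode t p) ∧
  (∀ p ∈ S, (∀ i < numChildren t p, p ++ [i] ∈ S) ∨ (∀ i < numChildren t p, p ++ [i] ∉ S)) ∧
  {p | p ∈ S ∧ 0 < numChildren t p ∧ ∀ i < numChildren t p, p ++ [i] ∉ S}.Subsingleton ∧
  (∀ p ∈ S, ∀ q ∈ S, p ≠ [] → q ≠ [] → p.dropLast ∉ S → q.dropLast ∉ S →
    p.dropLast = q.dropLast ∧
    ∀ i, p.getLastD 0 ≤ i → i ≤ q.getLastD 0 → p.dropLast ++ [i] ∈ S)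

/-- A partition of the zone `S` into the zones collected in `Z`. -/
def IsZonePartition {α : Type} (t : OTree α) (S : Set (List ℕ))
    (Z : Finset (Set (List ℕ))) : Prop :=
  (∀ A ∈ Z, IsZone t A) ∧
  ((Z : Set (Set (List ℕ))).PairwiseDisjoint id) ∧
  ⋃₀ (Z : Set (Set (List ℕ))) = S

end OTree

/-!
Fix a size bound `m`. A prefix-convex zone with more than `m` nodes is cut at a pivot `p`: a
deepest node (or, when the root is not in the zone, the common parent of its top nodes) with at
least `m` zone nodes strictly below it, all reached through children of `p` in the zone, and with
the vertical connection node, if any, among them. By maximality a child subtree of `p` has more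
than `m` nodes only if it misses the connection node. Without a connection node a greedy scan finds
a consecutive block of children carrying between `m / 2` and `m` nodes; with one, the block is the
child subtree containing it. The block becomes a final piece; the subtrees to its left and right
and the part of the zone above `p` are zones again and are cut recursively. Charging slack `4 m`
to zones without a connection node and `m` to the others bounds the number of pieces by `8 s / m`,
and `m = ⌊s ^ (1 - θ)⌋` gives `10 s ^ θ` (for `s ^ (1 - θ) ≤ 10`, singletons suffice). A zone that
is not prefix-convex splits into two prefix-convex ones.
-/

namespace OTree

variable {α : Type}

open Set

theorem subtreeAux_append (p q : List ℕ) (t : OTree α) :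
    subtreeAux (p ++ q) t = (subtreeAux p t).bind (subtreeAux q) := by
  induction p generalizing t with
  | nil => rfl
  | cons i p ih =>
    obtain ⟨a, ts⟩ := t
    simp only [List.cons_append, subtreeAux, Option.bind_assoc]
    congr 1
    funext c
    exact ih c

theorem subtree_append (t : OTree α) (p q : List ℕ) :
    subtree t (p ++ q) = (subtree t p).bind (subtreeAux q) :=
  subtreeAux_append p q t

theorem IsNode.of_prefix {t : OTree α} {p q : List ℕ} (h : IsNode t q) (hpq : p <+: q) :
    IsNode t p := by
  obtain ⟨r, rfl⟩ := hpq
  rw [IsNode, subtree_append] at h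
  rw [IsNode]
  cases hp : subtree t p <;> simp_all

theorem isNode_append_singleton {t : OTree α} {p : List ℕ} {i : ℕ} :
    IsNode t (p ++ [i]) ↔ i < numChildren t p := by
  rw [IsNode, subtree_append, numChildren]
  rcases subtree t p with _ | ⟨a, ts⟩
  · simp
  · simp [subtreeAux]

theorem nodes_finite : ∀ t : OTree α, (nodes t).Finite
  | node a ts => by
    have ih : ∀ c ∈ ts, (nodes c).Finite := fun c _ => nodes_finite c
    have hsub : nodes (node a ts) ⊆
        insert [] (⋃ i : Fin ts.length, List.cons i.1 '' nodes ts[i.1]) := by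
      rintro (_ | ⟨i, p⟩) hp
      · exact mem_insert _ _
      have hi : i < ts.length := by
        by_contra h
        simp [nodes, IsNode, subtree, subtreeAux, List.getElem?_eq_none (not_lt.1 h)] at hp
      refine mem_insert_of_mem _ (mem_iUnion.2 ⟨⟨i, hi⟩, p, ?_, rfl⟩)
      simpa [nodes, IsNode, subtree, subtreeAux, hi] using hp
    exact ((finite_iUnion fun i => (ih _ (ts.getElem_mem i.2)).image _).insert []).subset hsub
termination_by t => sizeOf t
decreasing_by
  have := List.sizeOf_lt_of_mem ‹c ∈ ts›
  simp only [node.sizeOf_spec]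
  omega

section Paths

variable {p q π : List ℕ} {i j : ℕ}

theorem dropLast_append_getLastD (h : p ≠ []) : p.dropLast ++ [p.getLastD 0] = p := by
  simp [List.getLastD_eq_getLast?, List.getLast?_eq_some_getLast h,
    List.dropLast_append_getLast h]

theorem prefix_dropLast_of_ne (h : p <+: q) (hne : p ≠ q) : p <+: q.dropLast := by
  obtain ⟨s, rfl⟩ := h
  have hs : s ≠ [] := by rintro rfl; simp at hne
  rw [List.dropLast_append_of_ne_nil hs]
  exact List.prefix_append _ _

theorem exists_append_singleton_prefix (h : p <+: q) (hne : p ≠ q) : ∃ i, p ++ [i] <+: q := by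
  obtain ⟨_ | ⟨i, s⟩, rfl⟩ := h
  · simp at hne
  · exact ⟨i, s, by simp⟩

theorem eq_of_append_singleton_prefix (hi : π ++ [i] <+: q) (hj : π ++ [j] <+: q) : i = j := by
  simpa using (List.prefix_of_prefix_length_le hi hj (by simp)).eq_of_length (by simp)

theorem append_singleton_prefix_append_singleton :
    π ++ [i] <+: q ++ [j] ↔ π = q ∧ i = j ∨ π ++ [i] <+: q := by
  simp [List.prefix_concat_iff]

end Paths

def PrefixConvex (S : Set (List ℕ)) : Prop :=
  ∀ ⦃p q r : List ℕ⦄, p ∈ S → q ∈ S → p <+: r → r <+: q → r ∈ S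

/-- The vertical connection nodes of `S`, of which a zone has at most one. -/
def ports (t : OTree α) (S : Set (List ℕ)) : Set (List ℕ) :=
  {p ∈ S | 0 < numChildren t p ∧ ∀ i < numChildren t p, p ++ [i] ∉ S}

def forestBelow (S : Set (List ℕ)) (π : List ℕ) (I : Set ℕ) : Set (List ℕ) :=
  {q ∈ S | ∃ i ∈ I, π ++ [i] <+: q}

theorem exists_top_of_prefix {S : Set (List ℕ)} {q r : List ℕ} (hq : q ∈ S) (hr : r ∉ S)
    (hrq : r <+: q) : ∃ a ∈ S, a ≠ [] ∧ a.dropLast ∉ S ∧ r <+: a.dropLast ∧ a <+: q := by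
  induction q using List.reverseRecOn with
  | nil => exact absurd (List.prefix_nil.1 hrq ▸ hq) hr
  | append_singleton q i ih =>
    rcases List.prefix_concat_iff.1 hrq with rfl | hrq
    · exact absurd hq hr
    by_cases hqS : q ∈ S
    · obtain ⟨a, ha, ha0, hat, hra, haq⟩ := ih hqS hrq
      exact ⟨a, ha, ha0, hat, hra, haq.trans (List.prefix_append q [i])⟩
    · exact ⟨q ++ [i], hq, by simp, by simpa, by simpa, List.prefix_refl _⟩

theorem prefixConvex_of_forall_dropLast_mem {S : Set (List ℕ)}
    (h : ∀ a ∈ S, a ≠ [] → a.dropLast ∈ S) : PrefixConvex S := by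
  intro p q r _ hq _ hrq
  by_contra hr
  obtain ⟨a, ha, ha0, hat, -⟩ := exists_top_of_prefix hq hr hrq
  exact hat (h a ha ha0)

section forestBelow

variable {S : Set (List ℕ)} {π : List ℕ} {I J : Set ℕ}

theorem forestBelow_subset : forestBelow S π I ⊆ S := fun _ h => h.1

theorem forestBelow_mono (h : I ⊆ J) : forestBelow S π I ⊆ forestBelow S π J :=
  fun _ ⟨hq, i, hi, hiq⟩ => ⟨hq, i, h hi, hiq⟩

theorem mem_forestBelow_of_prefix {q r : List ℕ} (hr : r ∈ forestBelow S π I) (hq : q ∈ S)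
    (hrq : r <+: q) : q ∈ forestBelow S π I :=
  let ⟨_, i, hi, hir⟩ := hr
  ⟨hq, i, hi, hir.trans hrq⟩

theorem forestBelow_union :
    forestBelow S π (I ∪ J) = forestBelow S π I ∪ forestBelow S π J := by
  ext q
  simp only [forestBelow, mem_union, mem_sep_iff]
  grind

theorem forestBelow_singleton (i : ℕ) : forestBelow S π {i} = {q ∈ S | π ++ [i] <+: q} := by
  ext q
  simp [forestBelow]

theorem disjoint_forestBelow (h : Disjoint I J) :
    Disjoint (forestBelow S π I) (forestBelow S π J) :=
  disjoint_left.2 fun _ ⟨_, _, hi, hqi⟩ ⟨_, _, hj, hqj⟩ =>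
    disjoint_left.1 h hi (eq_of_append_singleton_prefix hqi hqj ▸ hj)

theorem forestBelow_Iio_union_Icc_union_Ioi {lo up : ℕ} (h : lo ≤ up) :
    forestBelow S π (Iio lo) ∪ forestBelow S π (Icc lo up) ∪ forestBelow S π (Ioi up) =
      forestBelow S π univ := by
  rw [← forestBelow_union, ← forestBelow_union, Iio_union_Icc_eq_Iic h, Iic_union_Ioi]

theorem ncard_forestBelow (hS : S.Finite) (I : Finset ℕ) :
    (forestBelow S π I).ncard = ∑ i ∈ I, (forestBelow S π {i}).ncard := by
  induction I using Finset.induction_on with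
  | empty => simp [forestBelow]
  | insert i I hi ih =>
    rw [Finset.coe_insert, insert_eq, forestBelow_union,
      ncard_union_eq (disjoint_forestBelow (by simpa using hi)) (hS.subset forestBelow_subset)
        (hS.subset forestBelow_subset), ih, Finset.sum_insert hi]

theorem ncard_forestBelow_univ_add_one (hS : S.Finite) {p : List ℕ} (hp : p ∈ S) :
    (forestBelow S p univ).ncard + 1 = {q ∈ S | p <+: q}.ncard := by
  have : insert p (forestBelow S p univ) = {q ∈ S | p <+: q} := by
    ext q
    constructor
    · rintro (rfl | ⟨hq, i, -, hiq⟩)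
      exacts [⟨hp, List.prefix_refl _⟩, ⟨hq, (List.prefix_append p [i]).trans hiq⟩]
    · rintro ⟨hq, hpq⟩
      by_cases h : p = q
      · exact Or.inl h.symm
      · obtain ⟨i, hiq⟩ := exists_append_singleton_prefix hpq h
        exact Or.inr ⟨hq, i, trivial, hiq⟩
  rw [← this, ncard_insert_of_notMem _ (hS.subset forestBelow_subset)]
  rintro ⟨-, i, -, hi⟩
  simpa using hi.length_le

theorem append_singleton_mem_forestBelow {q : List ℕ} {j : ℕ} :
    q ++ [j] ∈ forestBelow S π I ↔
      q ++ [j] ∈ S ∧ (q = π ∧ j ∈ I ∨ ∃ i ∈ I, π ++ [i] <+: q) := by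
  simp only [forestBelow, mem_sep_iff, append_singleton_prefix_append_singleton]
  grind

theorem prefixConvex_forestBelow
    (hconv : ∀ i ∈ I, ∀ ⦃q r⦄, q ∈ S → π ++ [i] <+: r → r <+: q → r ∈ S) :
    PrefixConvex (forestBelow S π I) := by
  rintro p q r ⟨-, i, hi, hip⟩ hq hpr hrq
  exact ⟨hconv i hi hq.1 (hip.trans hpr) hrq, i, hi, hip.trans hpr⟩

theorem PrefixConvex.diff_forestBelow (hS : PrefixConvex S) :
    PrefixConvex (S \ forestBelow S π I) :=
  fun _ _ _ hp hq hpr hrq =>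
    ⟨hS hp.1 hq.1 hpr hrq, fun hr => hq.2 (mem_forestBelow_of_prefix hr hq.1 hrq)⟩

end forestBelow

section IsZone

variable {t : OTree α} {S : Set (List ℕ)} {π : List ℕ} {I : Set ℕ}

theorem IsZone.finite (hz : IsZone t S) : S.Finite := (nodes_finite t).subset hz.1

theorem IsZone.ports_subsingleton (hz : IsZone t S) : (ports t S).Subsingleton := hz.2.2.1

theorem IsZone.lt_numChildren (hz : IsZone t S) {p q : List ℕ} {i : ℕ} (hq : q ∈ S)
    (h : p ++ [i] <+: q) : i < numChildren t p :=
  isNode_append_singleton.1 ((hz.1 q hq).of_prefix h)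

theorem IsZone.dropLast_eq (hz : IsZone t S) {a b : List ℕ} (ha : a ∈ S) (hb : b ∈ S)
    (ha0 : a ≠ []) (hb0 : b ≠ []) (hat : a.dropLast ∉ S) (hbt : b.dropLast ∉ S) :
    a.dropLast = b.dropLast :=
  (hz.2.2.2 a ha b hb ha0 hb0 hat hbt).1

theorem IsZone.sibling_mem (hz : IsZone t S) {i j l : ℕ} (hi : π ++ [i] ∈ S)
    (hj : π ++ [j] ∈ S) (hil : i ≤ l) (hlj : l ≤ j) : π ++ [l] ∈ S := by
  by_cases hπ : π ∈ S
  · rcases hz.2.1 π hπ with hall | hnone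
    · exact hall l (hlj.trans_lt (hz.lt_numChildren hj (List.prefix_refl _)))
    · exact absurd hi (hnone i (hz.lt_numChildren hi (List.prefix_refl _)))
  · simpa using (hz.2.2.2 _ hi _ hj (by simp) (by simp) (by simpa) (by simpa)).2 l
      (by simpa using hil) (by simpa using hlj)

theorem IsZone.mem_of_prefix_of_top (hz : IsZone t S) {a q r : List ℕ} {i : ℕ} (ha : a ∈ S)
    (ha0 : a ≠ []) (hat : a.dropLast ∉ S) (hq : q ∈ S) (hir : a.dropLast ++ [i] <+: r)
    (hrq : r <+: q) : r ∈ S := by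
  by_contra hr
  obtain ⟨b, hb, hb0, hbt, hrb, -⟩ := exists_top_of_prefix hq hr hrq
  have := hir.length_le.trans hrb.length_le
  rw [hz.dropLast_eq hb ha hb0 ha0 hbt hat] at this
  simp at this

theorem ports_subset_forestBelow_univ (hz : IsZone t S) (hS : PrefixConvex S) {p : List ℕ}
    (hne : (forestBelow S p univ).Nonempty) (h : ∀ c ∈ ports t S, p <+: c) :
    ports t S ⊆ forestBelow S p univ := by
  intro c hc
  have hpc : p ≠ c := by
    rintro rfl
    obtain ⟨q, hq, i, -, hiq⟩ := hne
    have hi : p ++ [i] ∈ S := hS hc.1 hq (List.prefix_append p [i]) hiq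
    exact hc.2.2 i (hz.lt_numChildren hi (List.prefix_refl _)) hi
  obtain ⟨i, hi⟩ := exists_append_singleton_prefix (h c hc) hpc
  exact ⟨hc.1, i, trivial, hi⟩

theorem ports_forestBelow_subset : ports t (forestBelow S π I) ⊆ ports t S := by
  rintro q ⟨hq, hn, hch⟩
  exact ⟨hq.1, hn, fun j hj hjS =>
    hch j hj (mem_forestBelow_of_prefix hq hjS (List.prefix_append q [j]))⟩

theorem isZone_forestBelow (hz : IsZone t S) (hI : I.OrdConnected)
    (hconv : ∀ i ∈ I, ∀ ⦃q r⦄, q ∈ S → π ++ [i] <+: r → r <+: q → r ∈ S) :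
    IsZone t (forestBelow S π I) := by
  have htop : ∀ q ∈ forestBelow S π I, q.dropLast ∉ forestBelow S π I →
      ∃ i ∈ I, π ++ [i] = q := by
    rintro q ⟨hq, i, hi, hiq⟩ hd
    refine ⟨i, hi, ?_⟩
    by_contra hne
    have hid := prefix_dropLast_of_ne hiq hne
    exact hd ⟨hconv i hi hq hid (List.dropLast_prefix q), i, hi, hid⟩
  refine ⟨fun q hq => hz.1 q hq.1, fun q hq => ?_,
    hz.ports_subsingleton.anti ports_forestBelow_subset, ?_⟩
  · have hiff : ∀ j, q ++ [j] ∈ forestBelow S π I ↔ q ++ [j] ∈ S := fun j =>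
      ⟨fun h => h.1, fun h => mem_forestBelow_of_prefix hq h (List.prefix_append q [j])⟩
    simp only [hiff]
    exact hz.2.1 q hq.1
  · intro q₁ h₁ q₂ h₂ _ _ hd₁ hd₂
    obtain ⟨i₁, hi₁, rfl⟩ := htop q₁ h₁ hd₁
    obtain ⟨i₂, hi₂, rfl⟩ := htop q₂ h₂ hd₂
    simp only [List.dropLast_concat, List.getLastD_concat, true_and]
    exact fun l hl₁ hl₂ =>
      ⟨hz.sibling_mem h₁.1 h₂.1 hl₁ hl₂, l, hI.out hi₁ hi₂ ⟨hl₁, hl₂⟩, List.prefix_refl _⟩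

theorem isZone_diff_forestBelow (hz : IsZone t S)
    (hports : π ∈ S → ports t S ⊆ forestBelow S π univ) :
    IsZone t (S \ forestBelow S π univ) := by
  set D := forestBelow S π univ
  have hch : ∀ q ∈ S \ D, q ≠ π → ∀ j, q ++ [j] ∈ S \ D ↔ q ++ [j] ∈ S := by
    intro q hq hqπ j
    refine ⟨fun h => h.1, fun h => ⟨h, fun hD => ?_⟩⟩
    rcases (append_singleton_mem_forestBelow.1 hD).2 with ⟨rfl, -⟩ | ⟨i, -, hiq⟩
    exacts [hqπ rfl, hq.2 ⟨hq.1, i, trivial, hiq⟩]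
  have hports' : ∀ q ∈ ports t (S \ D), q ≠ π → q ∈ ports t S :=
    fun q ⟨hq, hn, hnone⟩ hqπ => ⟨hq.1, hn, fun j hj hjS => hnone j hj ((hch q hq hqπ j).2 hjS)⟩
  have htop : ∀ a ∈ S \ D, a ≠ [] → a.dropLast ∉ S \ D → a.dropLast ∉ S :=
    fun a ha _ hd hdS => ha.2 (mem_forestBelow_of_prefix (not_not.1 fun h => hd ⟨hdS, h⟩) ha.1
      (List.dropLast_prefix a))
  refine ⟨fun q hq => hz.1 q hq.1, fun q hq => ?_, ?_, ?_⟩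
  · by_cases hqπ : q = π
    · subst hqπ
      exact Or.inr fun j _ hj => hj.2 ⟨hj.1, j, trivial, List.prefix_refl _⟩
    · simp only [hch q hq hqπ]
      exact hz.2.1 q hq.1
  · by_cases hπ : π ∈ S
    · refine (subsingleton_singleton (a := π)).anti fun q (hq : q ∈ ports t (S \ D)) => ?_
      by_contra hqπ
      exact hq.1.2 (hports hπ (hports' q hq hqπ))
    · exact hz.ports_subsingleton.anti fun q hq => hports' q hq fun h => hπ (h ▸ hq.1.1)
  · intro a ha b hb ha0 hb0 hda hdb
    obtain ⟨hab, hsib⟩ :=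
      hz.2.2.2 a ha.1 b hb.1 ha0 hb0 (htop a ha ha0 hda) (htop b hb hb0 hdb)
    refine ⟨hab, fun l hl₁ hl₂ => ⟨hsib l hl₁ hl₂, fun hl => ha.2 ?_⟩⟩
    obtain ⟨-, h⟩ := append_singleton_mem_forestBelow.1 hl
    have := (append_singleton_mem_forestBelow (S := S) (I := univ) (j := a.getLastD 0)).2
      ⟨(dropLast_append_getLastD ha0).symm ▸ ha.1, h.imp_left fun h => ⟨h.1, trivial⟩⟩
    rwa [dropLast_append_getLastD ha0] at this

end IsZone

section Partition

variable {t : OTree α} {m n₁ n₂ : ℕ} {S S₁ S₂ : Set (List ℕ)}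

def PartitionsInto (t : OTree α) (m n : ℕ) (S : Set (List ℕ)) : Prop :=
  ∃ Z : Finset (Set (List ℕ)), IsZonePartition t S Z ∧ Z.card ≤ n ∧ ∀ A ∈ Z, A.ncard ≤ m

theorem PartitionsInto.single (hz : IsZone t S) (h : S.ncard ≤ m) : PartitionsInto t m 1 S :=
  ⟨{S}, ⟨by simpa, by simp, by simp⟩, by simp, by simpa⟩

theorem PartitionsInto.union (h₁ : PartitionsInto t m n₁ S₁) (h₂ : PartitionsInto t m n₂ S₂)
    (hd : Disjoint S₁ S₂) : PartitionsInto t m (n₁ + n₂) (S₁ ∪ S₂) := by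
  classical
  obtain ⟨Z₁, ⟨hz₁, hd₁, hu₁⟩, hn₁, hm₁⟩ := h₁
  obtain ⟨Z₂, ⟨hz₂, hd₂, hu₂⟩, hn₂, hm₂⟩ := h₂
  refine ⟨Z₁ ∪ Z₂, ⟨?_, ?_, ?_⟩, (Finset.card_union_le _ _).trans (add_le_add hn₁ hn₂), ?_⟩
  · simp only [Finset.mem_union]
    rintro A (hA | hA)
    exacts [hz₁ A hA, hz₂ A hA]
  · rw [Finset.coe_union, pairwiseDisjoint_union]
    refine ⟨hd₁, hd₂, fun A hA B hB _ => hd.mono ?_ ?_⟩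
    exacts [hu₁ ▸ subset_sUnion_of_mem hA, hu₂ ▸ subset_sUnion_of_mem hB]
  · rw [Finset.coe_union, sUnion_union, hu₁, hu₂]
  · simp only [Finset.mem_union]
    rintro A (hA | hA)
    exacts [hm₁ A hA, hm₂ A hA]

theorem isZone_singleton {p : List ℕ} (hp : IsNode t p) : IsZone t {p} := by
  refine ⟨by simpa, fun q hq => Or.inr fun i _ h => ?_,
    subsingleton_singleton.anti fun q hq => hq.1, ?_⟩
  · rw [mem_singleton_iff.1 hq] at h
    simpa using congrArg List.length (mem_singleton_iff.1 h)
  · rintro q rfl r rfl hq - - -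
    exact ⟨rfl, fun i h₁ h₂ => by rw [le_antisymm h₂ h₁, dropLast_append_getLastD hq]; rfl⟩

theorem partitionsInto_ncard (hS : S.Finite) (hnodes : ∀ p ∈ S, IsNode t p) :
    PartitionsInto t 1 S.ncard S := by
  induction S, hS using Set.Finite.induction_on with
  | empty => exact ⟨∅, ⟨by simp, by simp, by simp⟩, by simp, by simp⟩
  | @insert p S hp hS ih =>
    rw [ncard_insert_of_notMem hp hS, add_comm, insert_eq]
    exact (PartitionsInto.single (isZone_singleton (hnodes p (.inl rfl))) (by simp)).union
      (ih fun q hq => hnodes q (.inr hq)) (disjoint_singleton_left.2 hp)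

end Partition

section Admits

variable {t : OTree α} {m k : ℕ} {S : Set (List ℕ)}

/-- The summand `k * m` is slack kept for the recursion: zones without a vertical connection
node get slack `4 * m`, since only for them the block split off has at least `m / 2` nodes. -/
def AdmitsPartition (t : OTree α) (m k : ℕ) (S : Set (List ℕ)) : Prop :=
  ∃ n, PartitionsInto t m n S ∧ (n ≤ 1 ∨ m * n + k * m ≤ 8 * S.ncard)

theorem AdmitsPartition.of_ncard_le (hz : IsZone t S) (h : S.ncard ≤ m) :
    AdmitsPartition t m k S :=
  ⟨1, .single hz h, .inl le_rfl⟩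

theorem mul_le_of_count_bound {m n k s : ℕ} (h : n ≤ 1 ∨ m * n + k * m ≤ 8 * s) :
    m * n ≤ m ∨ m * n + k * m ≤ 8 * s :=
  h.imp_left (mul_le_of_le_one_right (Nat.zero_le m))

theorem count_bound_union {m n₁ n₂ s₁ s₂ : ℕ} (h₁ : n₁ ≤ 1 ∨ m * n₁ + 1 * m ≤ 8 * s₁)
    (h₂ : n₂ ≤ 1 ∨ m * n₂ + 1 * m ≤ 8 * s₂) (hs : m < s₁ + s₂) :
    n₁ + n₂ ≤ 1 ∨ m * (n₁ + n₂) + 0 * m ≤ 8 * (s₁ + s₂) := by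
  have := mul_le_of_count_bound h₁
  have := mul_le_of_count_bound h₂
  right
  rw [mul_add]
  omega

theorem count_bound_split {m k n₁ n₃ n₄ s₁ s₂ s₃ s₄ : ℕ}
    (h₁ : n₁ ≤ 1 ∨ m * n₁ + 4 * m ≤ 8 * s₁) (h₃ : n₃ ≤ 1 ∨ m * n₃ + 4 * m ≤ 8 * s₃)
    (h₄ : n₄ ≤ 1 ∨ m * n₄ + 1 * m ≤ 8 * s₄) (hD : m ≤ s₁ + s₂ + s₃)
    (hk : k = 1 ∨ k = 4 ∧ m ≤ 2 * s₂) :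
    n₁ + 1 + n₃ + n₄ ≤ 1 ∨ m * (n₁ + 1 + n₃ + n₄) + k * m ≤ 8 * (s₁ + s₂ + s₃ + s₄) := by
  have := mul_le_of_count_bound h₁
  have := mul_le_of_count_bound h₃
  have := mul_le_of_count_bound h₄
  right
  rw [mul_add, mul_add, mul_add, mul_one]
  rcases hk with rfl | ⟨rfl, _⟩ <;> omega

theorem AdmitsPartition.of_sdiff {L : Set (List ℕ)} (hU : AdmitsPartition t m 1 (S \ L))
    (hL : AdmitsPartition t m 1 L) (hsub : L ⊆ S) (hfin : S.Finite) (hs : m < S.ncard) :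
    AdmitsPartition t m 0 S := by
  obtain ⟨n₁, hp₁, hn₁⟩ := hU
  obtain ⟨n₂, hp₂, hn₂⟩ := hL
  have hcard := ncard_union_eq disjoint_sdiff_left hfin.sdiff (hfin.subset hsub)
  rw [← sdiff_union_of_subset hsub] at hs ⊢
  rw [hcard] at hs
  refine ⟨n₁ + n₂, hp₁.union hp₂ disjoint_sdiff_left, ?_⟩
  rw [hcard]
  exact count_bound_union hn₁ hn₂ hs

theorem AdmitsPartition.of_split {T₁ T₂ T₃ : Set (List ℕ)} (hfin : S.Finite)
    (h₁ : AdmitsPartition t m 4 T₁) (hz₂ : IsZone t T₂) (h₂ : T₂.ncard ≤ m)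
    (h₃ : AdmitsPartition t m 4 T₃) (hW : AdmitsPartition t m 1 (S \ (T₁ ∪ T₂ ∪ T₃)))
    (hsub : T₁ ∪ T₂ ∪ T₃ ⊆ S) (d₁₂ : Disjoint T₁ T₂) (d₁₂₃ : Disjoint (T₁ ∪ T₂) T₃)
    (hD : m ≤ (T₁ ∪ T₂ ∪ T₃).ncard) (hk : k = 1 ∨ k = 4 ∧ m ≤ 2 * T₂.ncard) :
    AdmitsPartition t m k S := by
  obtain ⟨n₁, hp₁, hn₁⟩ := h₁
  obtain ⟨n₃, hp₃, hn₃⟩ := h₃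
  obtain ⟨n₄, hp₄, hn₄⟩ := hW
  obtain ⟨hf₁₂, hf₃⟩ := finite_union.1 (hfin.subset hsub)
  obtain ⟨hf₁, hf₂⟩ := finite_union.1 hf₁₂
  rw [ncard_union_eq d₁₂₃ hf₁₂ hf₃, ncard_union_eq d₁₂ hf₁ hf₂] at hD
  rw [← union_sdiff_cancel hsub]
  refine ⟨n₁ + 1 + n₃ + n₄,
    ((hp₁.union (.single hz₂ h₂) d₁₂).union hp₃ d₁₂₃).union hp₄ disjoint_sdiff_right, ?_⟩
  rw [ncard_union_eq disjoint_sdiff_right (hf₁₂.union hf₃) hfin.sdiff,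
    ncard_union_eq d₁₂₃ hf₁₂ hf₃, ncard_union_eq d₁₂ hf₁ hf₂]
  exact count_bound_split hn₁ hn₃ hn₄ hD hk

end Admits

theorem exists_Icc_sum_le (f : ℕ → ℕ) {m K : ℕ} (hf : ∀ i, f i ≤ m)
    (h : m ≤ 2 * ∑ i ∈ Finset.range K, f i) :
    ∃ lo up, m ≤ 2 * ∑ i ∈ Finset.Icc lo up, f i ∧ ∑ i ∈ Finset.Icc lo up, f i ≤ m := by
  induction K with
  | zero => exact ⟨0, 0, by simp at h; omega, by simpa using hf 0⟩
  | succ K ih =>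
    by_cases hK : m ≤ 2 * ∑ i ∈ Finset.range K, f i
    · exact ih hK
    by_cases hle : ∑ i ∈ Finset.range (K + 1), f i ≤ m
    · exact ⟨0, K, by rwa [← Nat.range_succ_eq_Icc_zero], by rwa [← Nat.range_succ_eq_Icc_zero]⟩
    · rw [Finset.sum_range_succ] at h hle
      exact ⟨K, K, by simp; omega, by simpa using hf K⟩

section Pivot

variable {t : OTree α} {m : ℕ} {S : Set (List ℕ)} {p : List ℕ}

/-- `p` need not lie in `S`: for a zone without the root it is the parent of the top nodes. -/
structure IsPivot (t : OTree α) (m : ℕ) (S : Set (List ℕ)) (p : List ℕ) : Prop where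
  children_mem : ∀ ⦃i q⦄, q ∈ S → p ++ [i] <+: q → p ++ [i] ∈ S
  le_ncard : m ≤ (forestBelow S p univ).ncard
  ports_subset : ports t S ⊆ forestBelow S p univ

structure IsBlock (t : OTree α) (m : ℕ) (S : Set (List ℕ)) (p : List ℕ) (lo up : ℕ) :
    Prop where
  nonempty : (forestBelow S p (Icc lo up)).Nonempty
  ncard_le : (forestBelow S p (Icc lo up)).ncard ≤ m
  ports_subset : ports t S ⊆ forestBelow S p (Icc lo up)
  le_two_mul_ncard : ports t S = ∅ → m ≤ 2 * (forestBelow S p (Icc lo up)).ncard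

theorem exists_isPivot (hm : 1 ≤ m) (hz : IsZone t S) (hS : PrefixConvex S)
    (hbig : m < S.ncard) : ∃ p, IsPivot t m S p := by
  have hfin := hz.finite
  by_cases h0 : [] ∈ S
  · have hle : m ≤ (forestBelow S [] univ).ncard := by
      have := ncard_forestBelow_univ_add_one hfin h0
      simp only [List.nil_prefix, and_true, ofPred_mem_eq] at this
      omega
    exact ⟨[], fun i q hq h => hS h0 hq List.nil_prefix h, hle,
      ports_subset_forestBelow_univ hz hS (nonempty_of_ncard_ne_zero (by omega))
        fun _ _ => List.nil_prefix⟩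
  · obtain ⟨q, hq⟩ := nonempty_of_ncard_ne_zero (by omega : S.ncard ≠ 0)
    obtain ⟨a, ha, ha0, hat, -⟩ := exists_top_of_prefix hq h0 List.nil_prefix
    have hD : forestBelow S a.dropLast univ = S := by
      refine forestBelow_subset.antisymm fun q hq => ?_
      obtain ⟨b, hb, hb0, hbt, -, hbq⟩ := exists_top_of_prefix hq h0 List.nil_prefix
      rw [hz.dropLast_eq ha hb ha0 hb0 hat hbt]
      exact ⟨hq, b.getLastD 0, trivial, by rwa [dropLast_append_getLastD hb0]⟩
    refine ⟨a.dropLast, fun i q hq h => hz.mem_of_prefix_of_top ha ha0 hat hq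
      (List.prefix_refl _) h, ?_, ?_⟩ <;> rw [hD]
    exacts [hbig.le, fun c hc => hc.1]

theorem exists_maximalFor_isPivot (hm : 1 ≤ m) (hz : IsZone t S) (hS : PrefixConvex S)
    (hbig : m < S.ncard) : ∃ p, MaximalFor (IsPivot t m S) List.length p := by
  have hfin : {p | IsPivot t m S p}.Finite := by
    refine (hz.finite.biUnion fun q _ => q.inits.finite_toSet).subset fun p hp => ?_
    have : (forestBelow S p univ).ncard ≠ 0 := by have := hp.le_ncard; omega
    obtain ⟨q, hq, i, -, hiq⟩ := nonempty_of_ncard_ne_zero this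
    exact mem_biUnion hq ((List.mem_inits _ _).2 ((List.prefix_append p [i]).trans hiq))
  exact hfin.exists_maximalFor List.length _ (exists_isPivot hm hz hS hbig)

theorem ncard_forestBelow_singleton_le (hm : 1 ≤ m) (hz : IsZone t S) (hS : PrefixConvex S)
    (hp : MaximalFor (IsPivot t m S) List.length p) {i : ℕ}
    (hi : ports t S ⊆ forestBelow S p {i}) : (forestBelow S p {i}).ncard ≤ m := by
  by_contra! hlt
  have hfin := hz.finite
  obtain ⟨q, hq, j, hj, hiq⟩ :=
    nonempty_of_ncard_ne_zero (by omega : (forestBelow S p {i}).ncard ≠ 0)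
  rw [mem_singleton_iff.1 hj] at hiq
  have hc : p ++ [i] ∈ S := hp.1.children_mem hq hiq
  have hle : m ≤ (forestBelow S (p ++ [i]) univ).ncard := by
    have := ncard_forestBelow_univ_add_one hfin hc
    rw [← forestBelow_singleton] at this
    omega
  have hports : ∀ c ∈ ports t S, p ++ [i] <+: c := fun c hc => by
    obtain ⟨-, j, hj, hjc⟩ := hi hc
    rwa [← mem_singleton_iff.1 hj]
  have hpiv : IsPivot t m S (p ++ [i]) :=
    ⟨fun j q hq h => hS hc hq (List.prefix_append _ _) h, hle,
      ports_subset_forestBelow_univ hz hS (nonempty_of_ncard_ne_zero (by omega)) hports⟩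
  simpa using hp.2 hpiv (by simp)

theorem exists_isBlock (hm : 1 ≤ m) (hz : IsZone t S) (hS : PrefixConvex S)
    (hp : MaximalFor (IsPivot t m S) List.length p) : ∃ lo up, IsBlock t m S p lo up := by
  have hfin := hz.finite
  rcases (ports t S).eq_empty_or_nonempty with h0 | ⟨c, hc⟩
  · have hD : forestBelow S p univ = forestBelow S p (Finset.range (numChildren t p)) := by
      ext q
      simp only [forestBelow, Finset.coe_range, mem_univ, true_and, mem_Iio, mem_sep_iff]
      exact and_congr_right fun hq => ⟨fun ⟨i, hi⟩ => ⟨i, hz.lt_numChildren hq hi, hi⟩,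
        fun ⟨i, _, hi⟩ => ⟨i, hi⟩⟩
    have hsum := hp.1.le_ncard
    rw [hD, ncard_forestBelow hfin] at hsum
    obtain ⟨lo, up, h₁, h₂⟩ := exists_Icc_sum_le (fun i => (forestBelow S p {i}).ncard)
      (K := numChildren t p)
      (fun i => ncard_forestBelow_singleton_le hm hz hS hp (h0 ▸ empty_subset _)) (by omega)
    rw [← ncard_forestBelow hfin, Finset.coe_Icc] at h₁ h₂
    exact ⟨lo, up, nonempty_of_ncard_ne_zero (by omega), h₂, h0 ▸ empty_subset _, fun _ => h₁⟩
  · obtain ⟨-, k, -, hk⟩ := hp.1.ports_subset hc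
    have hports : ports t S ⊆ forestBelow S p {k} :=
      fun x hx => hz.ports_subsingleton hc hx ▸ ⟨hc.1, k, rfl, hk⟩
    refine ⟨k, k, ?_, ?_, ?_, fun h => absurd hc (h ▸ notMem_empty c)⟩ <;> rw [Icc_self]
    exacts [⟨c, hports hc⟩, ncard_forestBelow_singleton_le hm hz hS hp hports, hports]

end Pivot

section Recursion

variable {t : OTree α} {m k : ℕ} {S : Set (List ℕ)} {p : List ℕ} {lo up : ℕ}

theorem IsPivot.admitsPartition (hz : IsZone t S) (hS : PrefixConvex S) (hp : IsPivot t m S p)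
    (hb : IsBlock t m S p lo up)
    (ih : ∀ T : Set (List ℕ), T.ncard < S.ncard → IsZone t T → PrefixConvex T →
      AdmitsPartition t m 1 T ∧ (ports t T = ∅ → AdmitsPartition t m 4 T))
    (hk : k = 1 ∨ k = 4 ∧ ports t S = ∅) : AdmitsPartition t m k S := by
  have hconv (i : ℕ) ⦃q r : List ℕ⦄ (hq : q ∈ S) (hir : p ++ [i] <+: r) (hrq : r <+: q) :
      r ∈ S :=
    hS (hp.children_mem hq (hir.trans hrq)) hq hir hrq
  have hzone {I : Set ℕ} (hI : I.OrdConnected) : IsZone t (forestBelow S p I) :=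
    isZone_forestBelow hz hI fun i _ => hconv i
  have hconvex (I : Set ℕ) : PrefixConvex (forestBelow S p I) :=
    prefixConvex_forestBelow fun i _ => hconv i
  set T₂ := forestBelow S p (Icc lo up)
  obtain ⟨q₂, hq₂⟩ := hb.nonempty
  have hle : lo ≤ up := by
    obtain ⟨-, i, hi, -⟩ := hq₂
    exact hi.1.trans hi.2
  have hlt : ∀ T ⊆ S, Disjoint T T₂ → T.ncard < S.ncard := fun T hT hd =>
    ncard_lt_ncard ((ssubset_iff_of_subset hT).2 ⟨q₂, hq₂.1, disjoint_right.1 hd hq₂⟩) hz.finite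
  have hportless {I : Set ℕ} (hd : Disjoint (forestBelow S p I) T₂) :
      ports t (forestBelow S p I) = ∅ :=
    eq_empty_of_forall_notMem fun c hc =>
      disjoint_left.1 hd hc.1 (hb.ports_subset (ports_forestBelow_subset hc))
  have d₁₂ : Disjoint (forestBelow S p (Iio lo)) T₂ :=
    disjoint_forestBelow ((Iio_disjoint_Ici le_rfl).mono_right Icc_subset_Ici_self)
  have d₃₂ : Disjoint (forestBelow S p (Ioi up)) T₂ :=
    disjoint_forestBelow ((Iic_disjoint_Ioi le_rfl).symm.mono_right Icc_subset_Iic_self)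
  have d₁₂₃ : Disjoint (forestBelow S p (Iio lo) ∪ T₂) (forestBelow S p (Ioi up)) := by
    rw [← forestBelow_union, Iio_union_Icc_eq_Iic hle]
    exact disjoint_forestBelow (Iic_disjoint_Ioi le_rfl)
  have hD := forestBelow_Iio_union_Icc_union_Ioi (S := S) (π := p) hle
  refine .of_split hz.finite
    ((ih _ (hlt _ forestBelow_subset d₁₂) (hzone ordConnected_Iio) (hconvex _)).2
      (hportless d₁₂))
    (hzone ordConnected_Icc) hb.ncard_le
    ((ih _ (hlt _ forestBelow_subset d₃₂) (hzone ordConnected_Ioi) (hconvex _)).2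
      (hportless d₃₂)) ?_
    (hD ▸ forestBelow_subset) d₁₂ d₁₂₃
    (hD ▸ hp.le_ncard) (hk.imp_right fun ⟨hk, h0⟩ => ⟨hk, hb.le_two_mul_ncard h0⟩)
  rw [hD]
  exact (ih _ (hlt _ sdiff_subset
    (disjoint_sdiff_left.mono_right (forestBelow_mono (subset_univ _))))
    (isZone_diff_forestBelow hz fun _ => hp.ports_subset) hS.diff_forestBelow).1

theorem admitsPartition_of_prefixConvex (hm : 1 ≤ m) (hz : IsZone t S) (hS : PrefixConvex S) :
    AdmitsPartition t m 1 S ∧ (ports t S = ∅ → AdmitsPartition t m 4 S) := by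
  induction hn : S.ncard using Nat.strong_induction_on generalizing S with
  | _ n ih =>
  rcases le_or_gt S.ncard m with hsmall | hbig
  · exact ⟨.of_ncard_le hz hsmall, fun _ => .of_ncard_le hz hsmall⟩
  obtain ⟨p, hp⟩ := exists_maximalFor_isPivot hm hz hS hbig
  obtain ⟨lo, up, hb⟩ := exists_isBlock hm hz hS hp
  have ih' (T : Set (List ℕ)) (hT : T.ncard < S.ncard) (hzT : IsZone t T)
      (hST : PrefixConvex T) := ih T.ncard (hn ▸ hT) hzT hST rfl
  exact ⟨hp.1.admitsPartition hz hS hb ih' (.inl rfl),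
    fun h0 => hp.1.admitsPartition hz hS hb ih' (.inr ⟨rfl, h0⟩)⟩

theorem IsZone.admitsPartition (hm : 1 ≤ m) (hz : IsZone t S) : AdmitsPartition t m 0 S := by
  rcases le_or_gt S.ncard m with hsmall | hbig
  · exact .of_ncard_le hz hsmall
  by_cases htop : ∀ a ∈ S, a ≠ [] → a.dropLast ∈ S
  · obtain ⟨n, hn, hbound⟩ :=
      (admitsPartition_of_prefixConvex hm hz (prefixConvex_of_forall_dropLast_mem htop)).1
    exact ⟨n, hn, hbound.imp_right fun h => by omega⟩
  -- Cut off the forest below the parent of the top node `a`; what remains is closed under parents.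
  push Not at htop
  obtain ⟨a, ha, ha0, hat⟩ := htop
  set L := forestBelow S a.dropLast univ
  have hconv : ∀ i ∈ (univ : Set ℕ), ∀ ⦃q r⦄, q ∈ S → a.dropLast ++ [i] <+: r → r <+: q → r ∈ S :=
    fun i _ q r hq => hz.mem_of_prefix_of_top ha ha0 hat hq
  have hU : PrefixConvex (S \ L) := prefixConvex_of_forall_dropLast_mem fun b hb hb0 => by
    have hbS : b.dropLast ∈ S := by
      by_contra hbt
      refine hb.2 ⟨hb.1, b.getLastD 0, trivial, ?_⟩
      rw [hz.dropLast_eq ha hb.1 ha0 hb0 hat hbt, dropLast_append_getLastD hb0]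
    exact ⟨hbS, fun h => hb.2 (mem_forestBelow_of_prefix h hb.1 (List.dropLast_prefix b))⟩
  exact AdmitsPartition.of_sdiff
    (admitsPartition_of_prefixConvex hm (isZone_diff_forestBelow hz fun h => absurd h hat) hU).1
    (admitsPartition_of_prefixConvex hm (isZone_forestBelow hz ordConnected_univ hconv)
      (prefixConvex_forestBelow hconv)).1
    forestBelow_subset hz.finite hbig

end Recursion

theorem le_ten_mul_of_floor_mul_le {a x : ℝ} {n s : ℕ} (ha : 1 ≤ a) (hx : 10 < x)
    (hs : (s : ℝ) = a * x) (h : n ≤ 1 ∨ ⌊x⌋₊ * n ≤ 8 * s) : (n : ℝ) ≤ 10 * a := by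
  rcases h with h | h
  · have : (n : ℝ) ≤ 1 := by exact_mod_cast h
    linarith
  · have h' : (⌊x⌋₊ : ℝ) * n ≤ 8 * (a * x) := by
      rw [← hs]
      exact_mod_cast h
    have hfl := Nat.sub_one_lt_floor x
    nlinarith [(n.cast_nonneg : (0 : ℝ) ≤ n)]

end OTree

open OTree in
/-- a zone with `s` nodes can be partitioned into at most `10·s^θ`
zones, each of size at most `s^{1-θ}`, for any `0 < θ ≤ 1`. -/
theorem zone_partition {α : Type} (t : OTree α) (S : Set (List ℕ)) (θ : ℝ)
    (hθ : 0 < θ) (hθ1 : θ ≤ 1) (hzone : IsZone t S) :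
    ∃ Z : Finset (Set (List ℕ)),
      IsZonePartition t S Z ∧
      (Z.card : ℝ) ≤ 10 * (S.ncard : ℝ) ^ θ ∧
      ∀ A ∈ Z, (A.ncard : ℝ) ≤ (S.ncard : ℝ) ^ (1 - θ) := by
  obtain rfl | hne := S.eq_empty_or_nonempty
  · exact ⟨∅, ⟨by simp, by simp, by simp⟩, by simp; positivity, by simp⟩
  have hs : (1 : ℝ) ≤ S.ncard := by exact_mod_cast (Set.ncard_pos hzone.finite).2 hne
  set x := (S.ncard : ℝ) ^ (1 - θ)
  have hx : 1 ≤ x := Real.one_le_rpow hs (by linarith)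
  have hθs : 1 ≤ (S.ncard : ℝ) ^ θ := Real.one_le_rpow hs hθ.le
  have hsx : (S.ncard : ℝ) = (S.ncard : ℝ) ^ θ * x := by
    rw [← Real.rpow_add (by linarith)]
    norm_num
  suffices ∃ m n, PartitionsInto t m n S ∧ (m : ℝ) ≤ x ∧ (n : ℝ) ≤ 10 * (S.ncard : ℝ) ^ θ by
    obtain ⟨m, n, ⟨Z, hZ, hZn, hZm⟩, hmx, hn⟩ := this
    exact ⟨Z, hZ, le_trans (by exact_mod_cast hZn) hn,
      fun A hA => le_trans (by exact_mod_cast hZm A hA) hmx⟩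
  by_cases hx10 : x ≤ 10
  · exact ⟨1, S.ncard, partitionsInto_ncard hzone.finite hzone.1, by simpa, by nlinarith⟩
  · obtain ⟨n, hpart, hn⟩ := hzone.admitsPartition (m := ⌊x⌋₊) ((Nat.one_le_floor_iff x).2 hx)
    exact ⟨⌊x⌋₊, n, hpart, Nat.floor_le (by linarith),
      le_ten_mul_of_floor_mul_le hθs (by linarith) hsx (hn.imp_right fun h => by simpa using h)⟩
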